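/- Let A be a ⊖-algebra and let x be a prime ideal of A. Then: (a) for all prime ideals w₁, w₂ with (x, w₁) ∈ dom(+) and (x, w₂) ∈ dom(+), either x + w₁ ⊆ x + w₂ or x + w₂ ⊆ x + w₁ (the image of the left translation by x is totally ordered); and (b) for every prime ideal z with x ⊆ z there exists a prime ideal k with (x, k) ∈ dom(+) such that for every prime ideal w with (x, w) ∈ dom(+): x + w ⊆ z if and only if w ⊆ k (the left translation by x has an upper adjoint). -/
import Mathlib


class OminusAlgebra (A : Type*) extends DistribLattice A, BoundedOrder A where
  ominus : A → A → A
  inf_ominus : ∀ a b c : A, ominus (a ⊓ b) c = ominus a c ⊓ ominus b c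
  sup_ominus : ∀ a b c : A, ominus (a ⊔ b) c = ominus a c ⊔ ominus b c
  ominus_inf : ∀ a b c : A, ominus a (b ⊓ c) = ominus a b ⊔ ominus a c
  ominus_sup : ∀ a b c : A, ominus a (b ⊔ c) = ominus a b ⊓ ominus a c
  bot_ominus : ∀ a : A, ominus ⊥ a = ⊥
  ominus_top : ∀ a : A, ominus a ⊤ = ⊥
  ominus_bot : ∀ a : A, ominus a ⊥ = a

infixl:65 " ⊖ " => OminusAlgebra.ominus

variable {A : Type*} [OminusAlgebra A]

def oneg (a : A) : A := ⊤ ⊖ a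

def oplus (a b : A) : A := oneg (oneg a ⊖ b)

def IsPrimeIdeal (x : Set A) : Prop :=
  x.Nonempty ∧ (∀ a b : A, a ≤ b → b ∈ x → a ∈ x) ∧
    (∀ a b : A, a ∈ x → b ∈ x → a ⊔ b ∈ x) ∧ x ≠ Set.univ ∧
    (∀ a b : A, a ⊓ b ∈ x → a ∈ x ∨ b ∈ x)

def ineg (x : Set A) : Set A := {a | oneg a ∉ x}

def domPlus (x y : Set A) : Prop := y ⊆ ineg x

def pplus (x y : Set A) : Set A := {a | ∃ b ∈ y, a ⊖ b ∈ x}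

def domStar (x y : Set A) : Prop := ¬ ineg x ⊆ y

def pstar (x y : Set A) : Set A := {a | ∀ b ∉ y, a ⊖ b ∈ x}

lemma ominus_mono_left {a c : A} (b : A) (h : a ≤ c) : a ⊖ b ≤ c ⊖ b := by
  calc a ⊖ b = (a ⊓ c) ⊖ b := by rw [inf_eq_left.mpr h]
    _ = (a ⊖ b) ⊓ (c ⊖ b) := OminusAlgebra.inf_ominus a c b
    _ ≤ c ⊖ b := inf_le_right

lemma ominus_anti_right (a : A) {b c : A} (h : b ≤ c) : a ⊖ c ≤ a ⊖ b := by
  calc a ⊖ c = a ⊖ (b ⊔ c) := by rw [sup_eq_right.mpr h]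
    _ = (a ⊖ b) ⊓ (a ⊖ c) := OminusAlgebra.ominus_sup a b c
    _ ≤ a ⊖ b := inf_le_left

lemma key_ineq (a c b b' : A) : (a ⊖ b') ⊓ (c ⊖ b) ≤ (a ⊖ b) ⊔ (c ⊖ b') := by
  calc (a ⊖ b') ⊓ (c ⊖ b)
      ≤ ((a ⊔ c) ⊖ b') ⊓ ((a ⊔ c) ⊖ b) :=
        inf_le_inf (ominus_mono_left b' le_sup_left) (ominus_mono_left b le_sup_right)
    _ = (a ⊔ c) ⊖ (b' ⊔ b) := (OminusAlgebra.ominus_sup _ _ _).symm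
    _ = (a ⊖ (b' ⊔ b)) ⊔ (c ⊖ (b' ⊔ b)) := OminusAlgebra.sup_ominus a c _
    _ ≤ (a ⊖ b) ⊔ (c ⊖ b') :=
        sup_le_sup (ominus_anti_right a le_sup_right) (ominus_anti_right c le_sup_left)

theorem stmt6 {A : Type*} [OminusAlgebra A] (x : Set A) (hx : IsPrimeIdeal x) :
    (∀ w₁ w₂ : Set A, IsPrimeIdeal w₁ → IsPrimeIdeal w₂ →
      domPlus x w₁ → domPlus x w₂ →
      pplus x w₁ ⊆ pplus x w₂ ∨ pplus x w₂ ⊆ pplus x w₁) ∧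
    (∀ z : Set A, IsPrimeIdeal z → x ⊆ z →
      ∃ k : Set A, IsPrimeIdeal k ∧ domPlus x k ∧
        ∀ w : Set A, IsPrimeIdeal w → domPlus x w → (pplus x w ⊆ z ↔ w ⊆ k)) := by
  obtain ⟨hxne, hxdown, hxsup, hxproper, hxprime⟩ := hx
  have hbotx : (⊥ : A) ∈ x := by
    obtain ⟨a, ha⟩ := hxne
    exact hxdown ⊥ a bot_le ha
  constructor
  · intro w₁ w₂ hw₁ hw₂ hd₁ hd₂
    by_cases h : pplus x w₂ ⊆ pplus x w₁
    · exact Or.inr h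
    · left
      rw [Set.not_subset] at h
      obtain ⟨c, hc, hcn⟩ := h
      obtain ⟨b₂, hb₂, hcb₂⟩ := hc
      intro a ha
      obtain ⟨b₁, hb₁, hab₁⟩ := ha
      refine ⟨b₂, hb₂, ?_⟩
      by_contra hab₂
      have hcb₁ : c ⊖ b₁ ∉ x := fun h' => hcn ⟨b₁, hb₁, h'⟩
      have hu : (a ⊖ b₂) ⊓ (c ⊖ b₁) ∈ x :=
        hxdown _ _ (key_ineq a c b₁ b₂) (hxsup _ _ hab₁ hcb₂)
      rcases hxprime _ _ hu with h' | h'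
      · exact hab₂ h'
      · exact hcb₁ h'
  · intro z hz hxz
    obtain ⟨hzne, hzdown, hzsup, hzproper, hzprime⟩ := hz
    obtain ⟨t, ht⟩ : ∃ t : A, t ∉ z := by
      by_contra h
      push_neg at h
      exact hzproper (Set.eq_univ_of_forall h)
    refine ⟨{b | ∀ a : A, a ⊖ b ∈ x → a ∈ z}, ⟨⟨⊥, ?_⟩, ?_, ?_, ?_, ?_⟩, ?_, ?_⟩
    · -- ⊥ ∈ k
      intro a ha
      rw [OminusAlgebra.ominus_bot] at ha
      exact hxz ha
    · -- downward closed
      intro b b' hbb' hb' a ha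
      exact hb' a (hxdown _ _ (ominus_anti_right a hbb') ha)
    · -- join closed
      intro b b' hb hb' a ha
      rw [OminusAlgebra.ominus_sup] at ha
      rcases hxprime _ _ ha with h' | h'
      · exact hb a h'
      · exact hb' a h'
    · -- proper
      intro h
      have : (⊤ : A) ∈ {b | ∀ a : A, a ⊖ b ∈ x → a ∈ z} := h ▸ Set.mem_univ _
      have ht' : t ∈ z := this t (by rw [OminusAlgebra.ominus_top]; exact hbotx)
      exact ht ht'
    · -- prime
      intro b b' hbb'
      by_contra h
      push_neg at h
      obtain ⟨hb, hb'⟩ := h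
      simp only [Set.mem_setOf_eq, not_forall] at hb hb'
      obtain ⟨a, hax, haz⟩ := hb
      obtain ⟨c, hcx, hcz⟩ := hb'
      have hac : a ⊓ c ∉ z := fun h' => by
        rcases hzprime _ _ h' with h'' | h''
        · exact haz h''
        · exact hcz h''
      apply hac
      apply hbb'
      rw [OminusAlgebra.ominus_inf]
      exact hxsup _ _
        (hxdown _ _ (ominus_mono_left b inf_le_left) hax)
        (hxdown _ _ (ominus_mono_left b' inf_le_right) hcx)
    · -- domPlus x k
      intro b hb hnegb
      have : (⊤ : A) ∈ z := hb ⊤ hnegb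
      exact hzproper (Set.eq_univ_of_forall fun a => hzdown a ⊤ le_top this)
    · -- adjunction
      intro w hw hdw
      constructor
      · intro hsub b hb a ha
        exact hsub ⟨b, hb, ha⟩
      · intro hsub a ha
        obtain ⟨b, hb, hab⟩ := ha
        exact hsub hb a hab
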